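/- arXiv:1901.06670 — 7 statements merged into one kernel-verified Lean document; each statement's English description precedes it below -/
import Mathlib

section
/- Let a ∈ L^∞(ℝ) be 1-periodic, i.e. a(x+k) = a(x) for almost every x ∈ ℝ and every k ∈ ℤ, and set a_n(x) := a(n·x) for n ∈ ℕ. Then for every bounded interval I ⊆ ℝ one has ∫_I a_n(x) dx → 𝔐(a) · |I| as n → ∞, where 𝔐(a) := ∫_{[0,1)} a(y) dy is the mean value of a and |I| the length of I. -/
/-!
After replacing `a` by its genuinely periodic representative `a ∘ Int.fract`, the primitive
`F t = ∫ x in 0..t, a x` equals `t * 𝔐(a)` plus a continuous periodic, hence bounded, function.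
A bounded order-connected `I` is `(α, β]` up to null sets, and
`∫ x in α..β, a (n * x) = (F (n * β) - F (n * α)) / n = (β - α) * 𝔐(a) + O(1 / n)`.
-/

open MeasureTheory Filter

open Set Function Topology

noncomputable def primitiveDeviation {E : Type*} [NormedAddCommGroup E] [NormedSpace ℝ E]
    (f : ℝ → E) (T t : ℝ) : E :=
  (∫ x in 0..t, f x) - (t / T) • ∫ x in 0..T, f x

section PrimitiveDeviation

variable {E : Type*} [NormedAddCommGroup E] [NormedSpace ℝ E] {f : ℝ → E} {T : ℝ}

theorem periodic_primitiveDeviation (hf : Periodic f T) (hT : T ≠ 0)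
    (h_int : ∀ t₁ t₂, IntervalIntegrable f volume t₁ t₂) :
    Periodic (primitiveDeviation f T) T := fun t => by
  have hmul : (t + T) / T = t / T + 1 := by field_simp
  simp only [primitiveDeviation, hf.intervalIntegral_add_eq_add 0 t h_int, zero_add, hmul,
    add_smul, one_smul]
  abel

theorem exists_norm_primitiveDeviation_le (hf : Periodic f T) (hT : T ≠ 0)
    (h_int : ∀ t₁ t₂, IntervalIntegrable f volume t₁ t₂) :
    ∃ C, ∀ t, ‖primitiveDeviation f T t‖ ≤ C := by
  have hcont : Continuous (primitiveDeviation f T) :=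
    (intervalIntegral.continuous_primitive h_int 0).sub (by fun_prop)
  obtain ⟨C, hC⟩ :=
    ((periodic_primitiveDeviation hf hT h_int).isBounded_of_continuous hT hcont).exists_norm_le
  exact ⟨C, fun t => hC _ (mem_range_self t)⟩

theorem intervalIntegral_comp_mul_left_eq_add_primitiveDeviation
    (h_int : ∀ t₁ t₂, IntervalIntegrable f volume t₁ t₂) {s : ℝ} (hs : s ≠ 0) (α β : ℝ) :
    ∫ x in α..β, f (s * x) = ((β - α) / T) • (∫ x in 0..T, f x) +
      s⁻¹ • (primitiveDeviation f T (s * β) - primitiveDeviation f T (s * α)) := by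
  rw [intervalIntegral.integral_comp_mul_left f hs,
    ← intervalIntegral.integral_interval_sub_left (h_int 0 _) (h_int 0 _)]
  have hcoef : ∀ t, s⁻¹ * (s * t / T) = t / T := fun t => by field_simp
  simp only [primitiveDeviation, smul_sub, smul_smul, hcoef, sub_div, sub_smul]
  abel

theorem Function.Periodic.tendsto_intervalIntegral_comp_mul_left (hf : Periodic f T) (hT : T ≠ 0)
    (h_int : ∀ t₁ t₂, IntervalIntegrable f volume t₁ t₂) (α β : ℝ) :
    Tendsto (fun s : ℝ => ∫ x in α..β, f (s * x)) atTop
      (𝓝 (((β - α) / T) • ∫ x in 0..T, f x)) := by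
  obtain ⟨C, hC⟩ := exists_norm_primitiveDeviation_le hf hT h_int
  have hosc : Tendsto (fun s : ℝ => s⁻¹ •
      (primitiveDeviation f T (s * β) - primitiveDeviation f T (s * α))) atTop (𝓝 0) :=
    tendsto_inv_atTop_zero.zero_smul_isBoundedUnder_le ⟨C + C, eventually_map.2 <|
      Eventually.of_forall fun s => (norm_sub_le _ _).trans (add_le_add (hC _) (hC _))⟩
  have hlim := (tendsto_const_nhds (x := ((β - α) / T) • ∫ x in 0..T, f x)).add hosc
  rw [add_zero] at hlim
  refine hlim.congr' ?_
  filter_upwards [eventually_ne_atTop 0] with s hs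
  exact (intervalIntegral_comp_mul_left_eq_add_primitiveDeviation h_int hs α β).symm

end PrimitiveDeviation

theorem ae_eq_comp_fract {α : Type*} {μ : Measure ℝ} {a : ℝ → α}
    (hper : ∀ k : ℤ, ∀ᵐ x ∂μ, a (x + k) = a x) : (fun x => a (Int.fract x)) =ᵐ[μ] a := by
  filter_upwards [ae_all_iff.2 fun k : ℤ => hper (-k)] with x hx
  simpa [Int.fract, sub_eq_add_neg] using hx ⌊x⌋

theorem Set.OrdConnected.ae_eq_Ioc {μ : Measure ℝ} [NullSingletonClass μ] {I : Set ℝ}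
    (hI : I.OrdConnected) (hbd : Bornology.IsBounded I) : I =ᵐ[μ] Ioc (sInf I) (sSup I) := by
  rcases I.eq_empty_or_nonempty with rfl | hne
  · simp
  have hIoo : Ioo (sInf I) (sSup I) ⊆ I :=
    IsConnected.Ioo_csInf_csSup_subset ⟨hne, hI.isPreconnected⟩ hbd.bddBelow hbd.bddAbove
  refine EventuallyLE.antisymm ?_ ?_
  · exact hbd.subset_Icc_sInf_sSup.eventuallyLE.trans Ioc_ae_eq_Icc.symm.le
  · exact Ioo_ae_eq_Ioc.symm.le.trans hIoo.eventuallyLE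

theorem stmt_0_general (a : ℝ → ℝ) (ha : MemLp a ⊤ volume)
    (hper : ∀ k : ℤ, ∀ᵐ x : ℝ ∂volume, a (x + k) = a x)
    (I : Set ℝ) (hIbd : Bornology.IsBounded I)
    (hIint : I.OrdConnected) :
    Tendsto (fun n : ℕ => ∫ x in I, a (n * x))
      atTop (nhds ((∫ y in Set.Ico (0 : ℝ) 1, a y) * (volume I).toReal)) := by
  set b : ℝ → ℝ := fun x => a (Int.fract x)
  have hba : b =ᵐ[volume] a := ae_eq_comp_fract hper
  have hb_per : Periodic b 1 := fun x => by simp [b]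
  have hb_int : ∀ t₁ t₂, IntervalIntegrable b volume t₁ t₂ := fun _ _ =>
    (((ha.ae_eq hba.symm).locallyIntegrable le_top).integrableOn_isCompact
      isCompact_uIcc).intervalIntegrable
  have hI : I =ᵐ[volume] Ioc (sInf I) (sSup I) := hIint.ae_eq_Ioc hIbd
  have hmean : ∫ y in Ico (0 : ℝ) 1, a y = ∫ x in 0..1, b x := by
    rw [intervalIntegral.integral_of_le zero_le_one, setIntegral_congr_set Ico_ae_eq_Ioc]
    exact integral_congr_ae (ae_restrict_of_ae hba.symm)
  have hvol : (volume I).toReal = sSup I - sInf I := by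
    rw [measure_congr hI, Real.volume_Ioc,
      ENNReal.toReal_ofReal (sub_nonneg.2 (Real.sInf_le_sSup I hIbd.bddBelow hIbd.bddAbove))]
  have hrescale : ∀ᶠ n : ℕ in atTop,
      ∫ x in sInf I..sSup I, b (n * x) = ∫ x in I, a (n * x) := by
    filter_upwards [eventually_ne_atTop 0] with n hn
    rw [intervalIntegral.integral_of_le (Real.sInf_le_sSup I hIbd.bddBelow hIbd.bddAbove),
      setIntegral_congr_set hI]
    refine integral_congr_ae (ae_restrict_of_ae ?_)
    exact (Measure.quasiMeasurePreserving_smul volume (Nat.cast_ne_zero.2 hn)).ae_eq hba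
  rw [hmean, hvol, mul_comm, ← smul_eq_mul, ← div_one (sSup I - sInf I)]
  exact ((hb_per.tendsto_intervalIntegral_comp_mul_left one_ne_zero hb_int _ _).comp
    tendsto_natCast_atTop_atTop).congr' hrescale

/-- For a 1-periodic `a ∈ L^∞(ℝ)` and `a_n := a(n·)`, the integral of `a_n`
over any bounded interval `I` converges to the mean value `𝔐(a)` times the length of `I`. -/
theorem stmt_0 (a : ℝ → ℝ) (ha : MemLp a ⊤ volume)
    (hper : ∀ k : ℤ, ∀ᵐ x : ℝ ∂volume, a (x + k) = a x)
    (I : Set ℝ) (hImeas : MeasurableSet I) (hIbd : Bornology.IsBounded I)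
    (hIint : I.OrdConnected) :
    Tendsto (fun n : ℕ => ∫ x in I, a (n * x))
      atTop (nhds ((∫ y in Set.Ico (0 : ℝ) 1, a y) * (volume I).toReal)) :=
  stmt_0_general a ha hper I hIbd hIint
end

section
/- Let D and H₁ be complex Hilbert spaces and let C : D → H₁ be a bounded injective linear operator with closed range. Let a : H₁ → H₁ be a bounded linear operator and α > 0 such that Re⟨a q, q⟩ ≥ α‖q‖² for all q in the range of C. Then for every continuous linear functional f on D there exists a unique u ∈ D such that ⟨a(Cu), Cφ⟩ = f(φ) for all φ ∈ D. -/
/-!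
Since `C` is injective with closed range, it is bounded below, `c ‖u‖ ≤ ‖C u‖`. Hence the
operator `T = C† a C` on `D` is coercive, `α c² ‖u‖² ≤ Re ⟪T u, u⟫`, because
`⟪T u, φ⟫ = ⟪a (C u), C φ⟫`. A coercive operator is bounded below, so it is injective with closed
range, and its range has trivial orthogonal complement, so it is bijective. The problem then
reads `T u = f♯` for the Riesz representative `f♯` of `f`.
-/

open scoped InnerProductSpace

namespace ContinuousLinearMap

variable {𝕜 E F : Type*} [RCLike 𝕜]

theorem exists_pos_mul_norm_le_of_injective_of_isClosed_range [NormedAddCommGroup E]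
    [NormedSpace 𝕜 E] [CompleteSpace E] [NormedAddCommGroup F] [NormedSpace 𝕜 F]
    [CompleteSpace F] (C : E →L[𝕜] F) (hinj : Function.Injective C)
    (hclosed : IsClosed (Set.range C)) : ∃ c > 0, ∀ u, c * ‖u‖ ≤ ‖C u‖ := by
  obtain ⟨K, hK⟩ := C.antilipschitz_of_injective_of_isClosed_range hinj hclosed
  refine ⟨((K : ℝ) + 1)⁻¹, by positivity, fun u ↦ ?_⟩
  rw [inv_mul_le_iff₀ (by positivity)]
  calc ‖u‖ ≤ K * ‖C u‖ := C.bound_of_antilipschitz hK u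
    _ ≤ (K + 1) * ‖C u‖ := by gcongr; linarith

variable [NormedAddCommGroup E] [InnerProductSpace 𝕜 E]

theorem mul_norm_le_norm_apply_of_coercive {T : E →L[𝕜] E} {c : ℝ}
    (hT : ∀ u, c * ‖u‖ ^ 2 ≤ RCLike.re ⟪T u, u⟫_𝕜) (u : E) : c * ‖u‖ ≤ ‖T u‖ := by
  rcases eq_or_ne u 0 with rfl | hu
  · simp
  refine le_of_mul_le_mul_right ?_ (norm_pos_iff.mpr hu)
  calc c * ‖u‖ * ‖u‖ = c * ‖u‖ ^ 2 := by ring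
    _ ≤ RCLike.re ⟪T u, u⟫_𝕜 := hT u
    _ ≤ ‖T u‖ * ‖u‖ := (RCLike.re_le_norm _).trans (norm_inner_le_norm _ _)

theorem antilipschitz_of_coercive {T : E →L[𝕜] E} {c : ℝ} (hc : 0 < c)
    (hT : ∀ u, c * ‖u‖ ^ 2 ≤ RCLike.re ⟪T u, u⟫_𝕜) : AntilipschitzWith c⁻¹.toNNReal T :=
  T.antilipschitz_of_bound fun u ↦ by
    rw [Real.coe_toNNReal _ (inv_nonneg.mpr hc.le), inv_mul_eq_div, le_div_iff₀ hc, mul_comm]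
    exact mul_norm_le_norm_apply_of_coercive hT u

theorem bijective_of_coercive [CompleteSpace E] {T : E →L[𝕜] E} {c : ℝ} (hc : 0 < c)
    (hT : ∀ u, c * ‖u‖ ^ 2 ≤ RCLike.re ⟪T u, u⟫_𝕜) : Function.Bijective T := by
  have hanti := antilipschitz_of_coercive hc hT
  refine ⟨hanti.injective, ?_⟩
  have : CompleteSpace (LinearMap.range (T : E →ₗ[𝕜] E)) :=
    IsClosed.completeSpace_coe (hs := hanti.isClosed_range T.uniformContinuous)
  suffices LinearMap.range (T : E →ₗ[𝕜] E) = ⊤ from LinearMap.range_eq_top.mp this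
  rw [← Submodule.orthogonal_eq_bot_iff, Submodule.eq_bot_iff]
  intro v hv
  have hzero : ⟪T v, v⟫_𝕜 = 0 :=
    Submodule.inner_right_of_mem_orthogonal (LinearMap.mem_range_self _ v) hv
  have : c * ‖v‖ ^ 2 ≤ 0 := by simpa [hzero] using hT v
  have : ‖v‖ ^ 2 = 0 := le_antisymm (nonpos_of_mul_nonpos_right this hc) (by positivity)
  simpa using this

theorem existsUnique_inner_apply_eq_of_bijective [CompleteSpace E] {T : E →L[𝕜] E}
    (hT : Function.Bijective T) (f : StrongDual 𝕜 E) : ∃! u, ∀ φ, ⟪T u, φ⟫_𝕜 = f φ := by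
  have hriesz : ∀ x : E, (∀ φ, ⟪x, φ⟫_𝕜 = f φ) ↔ x = (InnerProductSpace.toDual 𝕜 E).symm f :=
    fun x ↦ ⟨fun hx ↦ ext_inner_right 𝕜 fun φ ↦ by rw [hx, InnerProductSpace.toDual_symm_apply],
      fun hx φ ↦ hx ▸ InnerProductSpace.toDual_symm_apply⟩
  simpa only [hriesz] using hT.existsUnique _

variable [CompleteSpace E] [NormedAddCommGroup F] [InnerProductSpace 𝕜 F] [CompleteSpace F]

theorem coercive_adjoint_comp_comp (C : E →L[𝕜] F) (a : F →L[𝕜] F) {c α : ℝ} (hc : 0 ≤ c)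
    (hC : ∀ u, c * ‖u‖ ≤ ‖C u‖) (hα : 0 ≤ α)
    (ha : ∀ q ∈ Set.range C, α * ‖q‖ ^ 2 ≤ RCLike.re ⟪a q, q⟫_𝕜) (u : E) :
    α * c ^ 2 * ‖u‖ ^ 2 ≤ RCLike.re ⟪(adjoint C ∘L a ∘L C) u, u⟫_𝕜 := by
  have hCu : (c * ‖u‖) ^ 2 ≤ ‖C u‖ ^ 2 := by gcongr; exact hC u
  calc α * c ^ 2 * ‖u‖ ^ 2 = α * (c * ‖u‖) ^ 2 := by ring
    _ ≤ α * ‖C u‖ ^ 2 := by gcongr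
    _ ≤ RCLike.re ⟪a (C u), C u⟫_𝕜 := ha _ ⟨u, rfl⟩
    _ = RCLike.re ⟪(adjoint C ∘L a ∘L C) u, u⟫_𝕜 := by
      rw [comp_apply, comp_apply, adjoint_inner_left]

end ContinuousLinearMap

/-- abstract Lax–Milgram type theorem: If `C : D → H₁` is a bounded injective
linear operator between complex Hilbert spaces with closed range and `a : H₁ → H₁` is bounded
with `Re⟨a q, q⟩ ≥ α‖q‖²` on the range of `C` for some `α > 0`, then for every continuous
linear functional `f` on `D` there is a unique `u ∈ D` with `⟨a(Cu), Cφ⟩ = f(φ)` for all `φ`. -/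
theorem stmt_4
    {D H₁ : Type*} [NormedAddCommGroup D] [InnerProductSpace ℂ D] [CompleteSpace D]
    [NormedAddCommGroup H₁] [InnerProductSpace ℂ H₁] [CompleteSpace H₁]
    (C : D →L[ℂ] H₁) (hCinj : Function.Injective C) (hCrange : IsClosed (Set.range C))
    (a : H₁ →L[ℂ] H₁) (α : ℝ) (hα : 0 < α)
    (hcoer : ∀ q ∈ Set.range C, α * ‖q‖ ^ 2 ≤ (inner ℂ (a q) q : ℂ).re)
    (f : D →L[ℂ] ℂ) :
    ∃! u : D, ∀ φ : D, (inner ℂ (a (C u)) (C φ) : ℂ) = f φ := by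
  obtain ⟨c, hc, hCc⟩ :=
    ContinuousLinearMap.exists_pos_mul_norm_le_of_injective_of_isClosed_range C hCinj hCrange
  have hT := ContinuousLinearMap.coercive_adjoint_comp_comp C a hc.le hCc hα.le hcoer
  simpa only [ContinuousLinearMap.comp_apply, ContinuousLinearMap.adjoint_inner_left] using
    ContinuousLinearMap.existsUnique_inner_apply_eq_of_bijective
      (ContinuousLinearMap.bijective_of_coercive (by positivity) hT) f
end

section
/- Let H be a complex Hilbert space, V ⊆ H a closed subspace with inclusion map ι : V → H, let a : H → H be a bounded linear operator and α > 0 such that Re⟨a v, v⟩ ≥ α‖v‖² for all v ∈ V. Then the compression ι* a ι : V → V is boundedly invertible and ‖(ι* a ι)^{-1}‖ ≤ 1/α. -/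
/-!
Coercivity `α‖v‖² ≤ Re⟪T v, v⟫` gives `α‖v‖ ≤ ‖T v‖` by Cauchy–Schwarz, so `T` is injective
with closed range, and a vector orthogonal to the range satisfies `⟪T w, w⟫ = 0`, hence `w = 0`.
So a coercive operator on a Hilbert space is invertible with `‖T⁻¹‖ ≤ 1/α`. The compression
`ι* a ι` inherits the coercivity of `a` on `V`, since `⟪ι* a v, v⟫ = ⟪a v, v⟫` for `v ∈ V`.
-/

open RCLike

section Coercive

variable {𝕜 E : Type*} [RCLike 𝕜] [NormedAddCommGroup E] [InnerProductSpace 𝕜 E]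
  {T : E →L[𝕜] E} {α : ℝ}

theorem mul_norm_le_norm_apply_of_coercive (hT : ∀ v, α * ‖v‖ ^ 2 ≤ re (inner 𝕜 (T v) v))
    (v : E) : α * ‖v‖ ≤ ‖T v‖ := by
  rcases eq_or_ne v 0 with rfl | hv
  · simp
  have hv : 0 < ‖v‖ := norm_pos_iff.mpr hv
  refine le_of_mul_le_mul_right ?_ hv
  calc α * ‖v‖ * ‖v‖ = α * ‖v‖ ^ 2 := by ring
    _ ≤ re (inner 𝕜 (T v) v) := hT v
    _ ≤ ‖inner 𝕜 (T v) v‖ := re_le_norm _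
    _ ≤ ‖T v‖ * ‖v‖ := norm_inner_le_norm _ _

theorem antilipschitz_of_coercive (hα : 0 < α)
    (hT : ∀ v, α * ‖v‖ ^ 2 ≤ re (inner 𝕜 (T v) v)) :
    AntilipschitzWith (Real.toNNReal α⁻¹) T :=
  T.antilipschitz_of_bound fun v ↦ by
    rw [Real.coe_toNNReal _ (inv_nonneg.mpr hα.le), inv_mul_eq_div, le_div_iff₀' hα]
    exact mul_norm_le_norm_apply_of_coercive hT v

theorem range_eq_top_of_coercive [CompleteSpace E] (hα : 0 < α)
    (hT : ∀ v, α * ‖v‖ ^ 2 ≤ re (inner 𝕜 (T v) v)) : T.range = ⊤ := by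
  have : CompleteSpace T.range :=
    ((antilipschitz_of_coercive hα hT).isClosed_range T.uniformContinuous).completeSpace_coe
  rw [← Submodule.orthogonal_eq_bot_iff, Submodule.eq_bot_iff]
  intro w hw
  have hTw : inner 𝕜 (T w) w = 0 :=
    Submodule.inner_right_of_mem_orthogonal (K := T.range) ⟨w, rfl⟩ hw
  have hw_sq : α * ‖w‖ ^ 2 ≤ 0 := by simpa [hTw] using hT w
  exact norm_eq_zero.mp <| pow_eq_zero_iff two_ne_zero |>.mp <|
    le_antisymm (nonpos_of_mul_nonpos_right hw_sq hα) (sq_nonneg _)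

variable (T) in
noncomputable def ContinuousLinearEquiv.ofCoercive [CompleteSpace E] (hα : 0 < α)
    (hT : ∀ v, α * ‖v‖ ^ 2 ≤ re (inner 𝕜 (T v) v)) : E ≃L[𝕜] E :=
  .ofBijective T (LinearMap.ker_eq_bot.mpr (antilipschitz_of_coercive hα hT).injective)
    (range_eq_top_of_coercive hα hT)

namespace ContinuousLinearEquiv

variable [CompleteSpace E] (hα : 0 < α) (hT : ∀ v, α * ‖v‖ ^ 2 ≤ re (inner 𝕜 (T v) v))

@[simp]
theorem ofCoercive_apply (v : E) : ofCoercive T hα hT v = T v :=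
  rfl

theorem norm_symm_ofCoercive_le : ‖((ofCoercive T hα hT).symm : E →L[𝕜] E)‖ ≤ 1 / α := by
  refine ContinuousLinearMap.opNorm_le_bound _ (by positivity) fun v ↦ ?_
  have hv := mul_norm_le_norm_apply_of_coercive hT ((ofCoercive T hα hT).symm v)
  rw [← ofCoercive_apply hα hT, apply_symm_apply] at hv
  rwa [one_div_mul_eq_div, le_div_iff₀' hα]

end ContinuousLinearEquiv

end Coercive

namespace Submodule

variable {𝕜 E : Type*} [RCLike 𝕜] [NormedAddCommGroup E] [InnerProductSpace 𝕜 E]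
  (K : Submodule 𝕜 E) [K.HasOrthogonalProjection]

noncomputable def compression (a : E →L[𝕜] E) : K →L[𝕜] K :=
  K.orthogonalProjectionOnto ∘L a ∘L K.subtypeL

theorem inner_compression_apply_self (a : E →L[𝕜] E) (v : K) :
    inner 𝕜 (K.compression a v) v = inner 𝕜 (a v) v :=
  K.inner_orthogonalProjectionOnto_eq_of_mem_right v (a v)

end Submodule

theorem stmt_7_general
    {H : Type*} [NormedAddCommGroup H] [InnerProductSpace ℂ H]
    (V : Submodule ℂ H) [CompleteSpace V]
    (a : H →L[ℂ] H) (α : ℝ) (hα : 0 < α)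
    (hcoer : ∀ v ∈ V, α * ‖v‖ ^ 2 ≤ (inner ℂ (a v) v : ℂ).re) :
    ∃ Tinv : V →L[ℂ] V,
      (V.orthogonalProjectionOnto.comp (a.comp V.subtypeL)).comp Tinv =
        ContinuousLinearMap.id ℂ V ∧
      Tinv.comp (V.orthogonalProjectionOnto.comp (a.comp V.subtypeL)) =
        ContinuousLinearMap.id ℂ V ∧
      ‖Tinv‖ ≤ 1 / α := by
  have hT (v : V) : α * ‖v‖ ^ 2 ≤ re (inner ℂ (V.compression a v) v) := by
    rw [V.inner_compression_apply_self]
    exact hcoer v v.2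
  let e := ContinuousLinearEquiv.ofCoercive _ hα hT
  refine ⟨e.symm, ?_, ?_, ContinuousLinearEquiv.norm_symm_ofCoercive_le hα hT⟩
  · exact e.coe_comp_coe_symm
  · exact e.coe_symm_comp_coe

/-- If `V` is a closed subspace of a complex Hilbert space `H` and `a : H → H`
is bounded with `Re⟨a v, v⟩ ≥ α‖v‖²` on `V` for some `α > 0`, then the compression
`ι* a ι : V → V` is boundedly invertible with `‖(ι* a ι)⁻¹‖ ≤ 1/α`. -/
theorem stmt_7
    {H : Type*} [NormedAddCommGroup H] [InnerProductSpace ℂ H] [CompleteSpace H]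
    (V : Submodule ℂ H) (hVclosed : IsClosed (V : Set H)) [CompleteSpace V]
    (a : H →L[ℂ] H) (α : ℝ) (hα : 0 < α)
    (hcoer : ∀ v ∈ V, α * ‖v‖ ^ 2 ≤ (inner ℂ (a v) v : ℂ).re) :
    ∃ Tinv : V →L[ℂ] V,
      (V.orthogonalProjectionOnto.comp (a.comp V.subtypeL)).comp Tinv =
        ContinuousLinearMap.id ℂ V ∧
      Tinv.comp (V.orthogonalProjectionOnto.comp (a.comp V.subtypeL)) =
        ContinuousLinearMap.id ℂ V ∧
      ‖Tinv‖ ≤ 1 / α :=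
  stmt_7_general V a α hα hcoer
end

section
/- Let H be a complex Hilbert space, V ⊆ H a closed subspace with orthogonal complement V^⊥, and denote by ι₀ : V → H and ι₁ : V^⊥ → H the inclusions. For a bounded operator a on H write the block components a₀₀ := ι₀* a ι₀, a₀₁ := ι₀* a ι₁, a₁₀ := ι₁* a ι₀, a₁₁ := ι₁* a ι₁. Suppose a is boundedly invertible and a₀₀ : V → V is boundedly invertible. Then the Schur complement a₁₁ − a₁₀ a₀₀^{-1} a₀₁ : V^⊥ → V^⊥ is boundedly invertible, the compression ι₁* a^{-1} ι₁ of the inverse a^{-1} to V^⊥ is boundedly invertible, and (ι₁* a^{-1} ι₁)^{-1} = a₁₁ − a₁₀ a₀₀^{-1} a₀₁. -/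
/-!
Write `a = [[A, B], [C, D]]` and `a⁻¹ = [[A', B'], [C', D']]` in blocks along `H = V ⊕ Vᗮ`,
and let `b = A⁻¹`. Since `ι₀ ι₀* + ι₁ ι₁* = 1`, a block of a product is the sum of the
products of blocks, so `a a⁻¹ = 1` gives `A B' + B D' = 0` and `C B' + D D' = 1`, while
`a⁻¹ a = 1` gives `C' A + D' C = 0` and `C' B + D' D = 1`. Substituting `B' = -b B D'` into
the second equation gives `(D - C b B) D' = 1`, and substituting `C' = -D' C b` into the
fourth gives `D' (D - C b B) = 1`.
-/

open ContinuousLinearMap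

section SchurComplement

variable {R M N : Type*} [Ring R]
  [TopologicalSpace M] [AddCommGroup M] [Module R M]
  [TopologicalSpace N] [AddCommGroup N] [Module R N] [IsTopologicalAddGroup N]
  {A b : M →L[R] M} {B B' : N →L[R] M} {C C' : M →L[R] N} {D D' : N →L[R] N}

theorem schur_complement_comp_eq_id [IsTopologicalAddGroup M] (hb : b ∘L A = .id R M)
    (h₁₁ : C ∘L B' + D ∘L D' = .id R N) (h₀₁ : A ∘L B' + B ∘L D' = 0) :
    (D - C ∘L b ∘L B) ∘L D' = .id R N := by
  have hBD' : B ∘L D' = -(A ∘L B') := eq_neg_of_add_eq_zero_right h₀₁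
  calc (D - C ∘L b ∘L B) ∘L D' = D ∘L D' + C ∘L (b ∘L A) ∘L B' := by
        rw [sub_comp, comp_assoc, comp_assoc, hBD', comp_neg, comp_neg, sub_neg_eq_add,
          ← comp_assoc b]
    _ = .id R N := by rw [hb, id_comp, add_comm, h₁₁]

theorem comp_schur_complement_eq_id (hb : A ∘L b = .id R M)
    (h₁₁ : C' ∘L B + D' ∘L D = .id R N) (h₁₀ : C' ∘L A + D' ∘L C = 0) :
    D' ∘L (D - C ∘L b ∘L B) = .id R N := by
  have hD'C : D' ∘L C = -(C' ∘L A) := eq_neg_of_add_eq_zero_right h₁₀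
  calc D' ∘L (D - C ∘L b ∘L B) = D' ∘L D + C' ∘L (A ∘L b) ∘L B := by
        rw [comp_sub, ← comp_assoc, ← comp_assoc, hD'C, neg_comp, neg_comp, sub_neg_eq_add,
          comp_assoc, comp_assoc, ← comp_assoc A]
    _ = .id R N := by rw [hb, id_comp, add_comm, h₁₁]

end SchurComplement

namespace Submodule

variable {𝕜 E F G : Type*} [RCLike 𝕜] [NormedAddCommGroup E] [InnerProductSpace 𝕜 E]
  [NormedAddCommGroup F] [NormedSpace 𝕜 F] [NormedAddCommGroup G] [NormedSpace 𝕜 G]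
  (K : Submodule 𝕜 E) [K.HasOrthogonalProjection]

theorem orthogonalProjectionOnto_comp_subtypeL :
    K.orthogonalProjectionOnto ∘L K.subtypeL = .id 𝕜 K := by
  ext x; simp

theorem comp_comp_comp_eq_add_orthogonalProjectionOnto (p : E →L[𝕜] F) (S T : E →L[𝕜] E)
    (i : G →L[𝕜] E) :
    p ∘L (S ∘L T) ∘L i =
      (p ∘L S ∘L K.subtypeL) ∘L (K.orthogonalProjectionOnto ∘L T ∘L i) +
        (p ∘L S ∘L Kᗮ.subtypeL) ∘L (Kᗮ.orthogonalProjectionOnto ∘L T ∘L i) := by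
  ext x
  simp only [comp_apply, add_apply, subtypeL_apply, ← map_add, ← starProjection_apply,
    starProjection_add_starProjection_orthogonal]

end Submodule

theorem stmt_8_general
    {H : Type*} [NormedAddCommGroup H] [InnerProductSpace ℂ H]
    (V : Submodule ℂ H) [CompleteSpace V]
    (a ainv : H →L[ℂ] H)
    (ha₁ : a.comp ainv = ContinuousLinearMap.id ℂ H)
    (ha₂ : ainv.comp a = ContinuousLinearMap.id ℂ H)
    (b : V →L[ℂ] V)
    (hb₁ : ((Submodule.orthogonalProjectionOnto V).comp (a.comp V.subtypeL)).comp b =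
      ContinuousLinearMap.id ℂ V)
    (hb₂ : b.comp ((Submodule.orthogonalProjectionOnto V).comp (a.comp V.subtypeL)) =
      ContinuousLinearMap.id ℂ V) :
    ContinuousLinearMap.comp
      (((Submodule.orthogonalProjectionOnto Vᗮ).comp (a.comp Vᗮ.subtypeL)) -
        ((Submodule.orthogonalProjectionOnto Vᗮ).comp (a.comp V.subtypeL)).comp
          (b.comp ((Submodule.orthogonalProjectionOnto V).comp (a.comp Vᗮ.subtypeL))))
      ((Submodule.orthogonalProjectionOnto Vᗮ).comp (ainv.comp Vᗮ.subtypeL)) =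
        ContinuousLinearMap.id ℂ Vᗮ ∧
    ContinuousLinearMap.comp
      ((Submodule.orthogonalProjectionOnto Vᗮ).comp (ainv.comp Vᗮ.subtypeL))
      (((Submodule.orthogonalProjectionOnto Vᗮ).comp (a.comp Vᗮ.subtypeL)) -
        ((Submodule.orthogonalProjectionOnto Vᗮ).comp (a.comp V.subtypeL)).comp
          (b.comp ((Submodule.orthogonalProjectionOnto V).comp (a.comp Vᗮ.subtypeL)))) =
        ContinuousLinearMap.id ℂ Vᗮ := by
  set P := V.orthogonalProjectionOnto
  set Q := Vᗮ.orthogonalProjectionOnto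
  have hPι₁ : P ∘L Vᗮ.subtypeL = 0 :=
    (V.isOrtho_orthogonal_right).orthogonalProjectionOnto_comp_subtypeL
  have hQι₀ : Q ∘L V.subtypeL = 0 :=
    (V.isOrtho_orthogonal_left).orthogonalProjectionOnto_comp_subtypeL
  have hQι₁ : Q ∘L Vᗮ.subtypeL = .id ℂ Vᗮ := Vᗮ.orthogonalProjectionOnto_comp_subtypeL
  have hMulInv₁₁ := V.comp_comp_comp_eq_add_orthogonalProjectionOnto Q a ainv Vᗮ.subtypeL
  rw [ha₁, id_comp, hQι₁] at hMulInv₁₁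
  have hMulInv₀₁ := V.comp_comp_comp_eq_add_orthogonalProjectionOnto P a ainv Vᗮ.subtypeL
  rw [ha₁, id_comp, hPι₁] at hMulInv₀₁
  have hInvMul₁₁ := V.comp_comp_comp_eq_add_orthogonalProjectionOnto Q ainv a Vᗮ.subtypeL
  rw [ha₂, id_comp, hQι₁] at hInvMul₁₁
  have hInvMul₁₀ := V.comp_comp_comp_eq_add_orthogonalProjectionOnto Q ainv a V.subtypeL
  rw [ha₂, id_comp, hQι₀] at hInvMul₁₀
  exact ⟨schur_complement_comp_eq_id hb₂ hMulInv₁₁.symm hMulInv₀₁.symm,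
    comp_schur_complement_eq_id hb₁ hInvMul₁₁.symm hInvMul₁₀.symm⟩

/-- Schur complement identity: for a boundedly invertible `a` on a complex
Hilbert space `H` decomposed along a closed subspace `V` and `Vᗮ`, if the block `a₀₀` is
boundedly invertible then the Schur complement `a₁₁ − a₁₀ a₀₀⁻¹ a₀₁` is boundedly invertible,
the compression `ι₁* a⁻¹ ι₁` of `a⁻¹` to `Vᗮ` is boundedly invertible, and
`(ι₁* a⁻¹ ι₁)⁻¹ = a₁₁ − a₁₀ a₀₀⁻¹ a₀₁`. -/
theorem stmt_8
    {H : Type*} [NormedAddCommGroup H] [InnerProductSpace ℂ H] [CompleteSpace H]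
    (V : Submodule ℂ H) (hVclosed : IsClosed (V : Set H)) [CompleteSpace V]
    (a ainv : H →L[ℂ] H)
    (ha₁ : a.comp ainv = ContinuousLinearMap.id ℂ H)
    (ha₂ : ainv.comp a = ContinuousLinearMap.id ℂ H)
    (b : V →L[ℂ] V)
    (hb₁ : ((Submodule.orthogonalProjectionOnto V).comp (a.comp V.subtypeL)).comp b =
      ContinuousLinearMap.id ℂ V)
    (hb₂ : b.comp ((Submodule.orthogonalProjectionOnto V).comp (a.comp V.subtypeL)) =
      ContinuousLinearMap.id ℂ V) :
    ContinuousLinearMap.comp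
      (((Submodule.orthogonalProjectionOnto Vᗮ).comp (a.comp Vᗮ.subtypeL)) -
        ((Submodule.orthogonalProjectionOnto Vᗮ).comp (a.comp V.subtypeL)).comp
          (b.comp ((Submodule.orthogonalProjectionOnto V).comp (a.comp Vᗮ.subtypeL))))
      ((Submodule.orthogonalProjectionOnto Vᗮ).comp (ainv.comp Vᗮ.subtypeL)) =
        ContinuousLinearMap.id ℂ Vᗮ ∧
    ContinuousLinearMap.comp
      ((Submodule.orthogonalProjectionOnto Vᗮ).comp (ainv.comp Vᗮ.subtypeL))
      (((Submodule.orthogonalProjectionOnto Vᗮ).comp (a.comp Vᗮ.subtypeL)) -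
        ((Submodule.orthogonalProjectionOnto Vᗮ).comp (a.comp V.subtypeL)).comp
          (b.comp ((Submodule.orthogonalProjectionOnto V).comp (a.comp Vᗮ.subtypeL)))) =
        ContinuousLinearMap.id ℂ Vᗮ :=
  stmt_8_general V a ainv ha₁ ha₂ b hb₁ hb₂
end

section
/- Let E ⊆ ℂ be open, let H and K be separable complex Hilbert spaces, and let (M_n)_n be a sequence of functions M_n : E → B(H,K) such that (i) for each n and all φ ∈ H, ψ ∈ K the function z ↦ ⟨ψ, M_n(z) φ⟩ is analytic on E, and (ii) for every compact set L ⊆ E one has sup_n sup_{z ∈ L} ‖M_n(z)‖ < ∞. Then there exist a function M : E → B(H,K) and a strictly monotone map κ : ℕ → ℕ such that for all φ ∈ H, ψ ∈ K the function z ↦ ⟨ψ, M(z) φ⟩ is analytic on E and ⟨ψ, M_{κ(n)}(z) φ⟩ → ⟨ψ, M(z) φ⟩ as n → ∞ uniformly in z on every compact subset of E. -/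
/-!
The pairings `⟪ψ, M n z φ⟫` are holomorphic in `z` and bounded on compacts uniformly in `n`, so by
Cauchy's estimate they are equicontinuous in `z`; they are also equicontinuous in `φ` and in `ψ`
since the operators are bounded. A diagonal argument gives a subsequence along which the pairings
converge for `φ`, `ψ`, `z` in countable dense subsets of `H`, `K`, `E`. Equicontinuity propagates
the Cauchy property to all `φ`, `ψ` and all `z ∈ E`, and upgrades pointwise convergence to uniform
convergence on compacts. At each `z`, the limit sesquilinear form is represented by a bounded
operator (Banach–Steinhaus and Riesz), and the limit pairings are holomorphic as locally uniform
limits of holomorphic functions.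
-/

open Filter Metric Topology

section Equicontinuity

variable {ι X α : Type*} [TopologicalSpace X]

theorem EquicontinuousAt.cauchySeq_of_mem_closure [PseudoMetricSpace α] {F : ℕ → X → α}
    {s : Set X} {x : X} (hF : EquicontinuousAt F x) (hs : ∀ y ∈ s, CauchySeq (F · y))
    (hx : x ∈ closure s) : CauchySeq (F · x) := by
  refine Metric.cauchySeq_iff.mpr fun ε hε => ?_
  obtain ⟨y, hy, hxy⟩ := ((mem_closure_iff_frequently.mp hx).and_eventually
    (Metric.equicontinuousAt_iff_right.mp hF (ε / 3) (by positivity))).exists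
  obtain ⟨N, hN⟩ := Metric.cauchySeq_iff.mp (hs y hy) (ε / 3) (by positivity)
  refine ⟨N, fun m hm n hn => ?_⟩
  calc dist (F m x) (F n x)
        ≤ dist (F m x) (F m y) + dist (F m y) (F n y) + dist (F n y) (F n x) :=
          dist_triangle4 _ _ _ _
    _ < ε / 3 + ε / 3 + ε / 3 := by
        gcongr
        · exact hxy m
        · exact hN m hm n hn
        · rw [dist_comm]; exact hxy n
    _ = ε := by ring

theorem EquicontinuousOn.tendstoUniformlyOn_of_tendsto [UniformSpace α] {F : ι → X → α}
    {f : X → α} {l : Filter ι} {L : Set X} (hL : IsCompact L) (hF : EquicontinuousOn F L)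
    (h : ∀ x ∈ L, Tendsto (F · x) l (𝓝 (f x))) : TendstoUniformlyOn F f l L := by
  have := (EquicontinuousOn.tendsto_uniformOnFun_iff_pi' (𝔖 := {L}) (by simpa using hL)
    (by simpa using hF) l f).mpr ?_
  · exact (UniformOnFun.tendsto_iff_tendstoUniformlyOn.mp this) L rfl
  · exact tendsto_pi_nhds.mpr fun x => h x (by simpa using x.2)

end Equicontinuity

theorem ContinuousLinearMap.equicontinuous_of_norm_apply_le {ι 𝕜 𝕜₂ E F : Type*}
    [NontriviallyNormedField 𝕜] [NontriviallyNormedField 𝕜₂] {σ : 𝕜 →+* 𝕜₂}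
    [RingHomIsometric σ] [SeminormedAddCommGroup E] [SeminormedAddCommGroup F]
    [NormedSpace 𝕜 E] [NormedSpace 𝕜₂ F] {f : ι → E →SL[σ] F} (C : ℝ)
    (h : ∀ i x, ‖f i x‖ ≤ C * ‖x‖) : Equicontinuous fun i => ⇑(f i) :=
  ((NormedSpace.equicontinuous_TFAE f).out 3 1).mp (show ∃ C, ∀ i x, ‖f i x‖ ≤ C * ‖x‖ from ⟨C, h⟩)

theorem tendsto_subseq_of_forall_isBounded {ι α : Type*} [Countable ι] [PseudoMetricSpace α]
    [ProperSpace α] (u : ℕ → ι → α) (hu : ∀ i, Bornology.IsBounded (Set.range fun n => u n i)) :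
    ∃ g : ι → α, ∃ κ : ℕ → ℕ, StrictMono κ ∧ Tendsto (u ∘ κ) atTop (𝓝 g) := by
  have hK : IsCompact (Set.univ.pi fun i => closure (Set.range fun n => u n i)) :=
    isCompact_univ_pi fun i => (hu i).isCompact_closure
  obtain ⟨g, -, κ, hκ, hlim⟩ :=
    hK.isSeqCompact fun n => Set.mem_univ_pi.mpr fun i => subset_closure ⟨n, rfl⟩
  exact ⟨g, κ, hκ, hlim⟩

section Hilbert

variable {H K : Type*} [NormedAddCommGroup H] [InnerProductSpace ℂ H]
  [NormedAddCommGroup K] [InnerProductSpace ℂ K]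

theorem norm_inner_apply_le_of_opNorm_le {T : H →L[ℂ] K} {C : ℝ} (hT : ‖T‖ ≤ C) (φ : H) (ψ : K) :
    ‖inner ℂ ψ (T φ)‖ ≤ C * ‖φ‖ * ‖ψ‖ :=
  calc ‖inner ℂ ψ (T φ)‖ ≤ ‖ψ‖ * ‖T φ‖ := norm_inner_le_norm _ _
    _ ≤ ‖ψ‖ * (C * ‖φ‖) := by gcongr; exact T.le_of_opNorm_le hT φ
    _ = C * ‖φ‖ * ‖ψ‖ := by ring

theorem cauchySeq_inner_apply_of_dense {T : ℕ → H →L[ℂ] K} {C : ℝ} (hC : ∀ n, ‖T n‖ ≤ C)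
    {sH : Set H} {sK : Set K} (hsH : Dense sH) (hsK : Dense sK)
    (h : ∀ φ ∈ sH, ∀ ψ ∈ sK, CauchySeq fun n => inner ℂ ψ (T n φ)) (φ : H) (ψ : K) :
    CauchySeq fun n => inner ℂ ψ (T n φ) := by
  have hcauchy_sK : ∀ ψ ∈ sK, CauchySeq fun n => inner ℂ ψ (T n φ) := by
    intro ψ hψ
    have hequi := ContinuousLinearMap.equicontinuous_of_norm_apply_le
      (f := fun n => (innerSL ℂ ψ).comp (T n)) (C * ‖ψ‖) fun n φ' => by
        simpa [mul_right_comm] using norm_inner_apply_le_of_opNorm_le (hC n) φ' ψ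
    exact (hequi φ).cauchySeq_of_mem_closure (h · · ψ hψ) (hsH.closure_eq ▸ Set.mem_univ φ)
  have hequi := ContinuousLinearMap.equicontinuous_of_norm_apply_le
    (f := fun n => innerSLFlip ℂ (T n φ)) (C * ‖φ‖) fun n ψ' => by
      simpa using norm_inner_apply_le_of_opNorm_le (hC n) φ ψ'
  exact (hequi ψ).cauchySeq_of_mem_closure hcauchy_sK (hsK.closure_eq ▸ Set.mem_univ ψ)

theorem norm_le_of_tendsto_inner {x : ℕ → K} {v : K} {B : ℝ} (hx : ∀ n, ‖x n‖ ≤ B)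
    (h : ∀ ψ, Tendsto (fun n => inner ℂ ψ (x n)) atTop (𝓝 (inner ℂ ψ v))) : ‖v‖ ≤ B := by
  have hB : 0 ≤ B := (norm_nonneg _).trans (hx 0)
  have hsq : ‖v‖ * ‖v‖ ≤ ‖v‖ * B := by
    rw [← inner_self_eq_norm_mul_norm (𝕜 := ℂ), inner_self_re_eq_norm]
    exact le_of_tendsto' (h v).norm fun n => (norm_inner_le_norm _ _).trans (by gcongr; exact hx n)
  nlinarith [norm_nonneg v]

variable [CompleteSpace K]

theorem exists_tendsto_inner_of_cauchySeq {x : ℕ → K}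
    (h : ∀ ψ, CauchySeq fun n => inner ℂ ψ (x n)) :
    ∃ v : K, ∀ ψ, Tendsto (fun n => inner ℂ ψ (x n)) atTop (𝓝 (inner ℂ ψ v)) := by
  choose l hl using fun ψ => cauchySeq_tendsto_of_complete (h ψ)
  have hdual : Tendsto (fun n ψ => InnerProductSpace.toDual ℂ K (x n) ψ) atTop
      (𝓝 fun ψ => star (l ψ)) :=
    tendsto_pi_nhds.mpr fun ψ => by simpa using (hl ψ).star
  refine ⟨(InnerProductSpace.toDual ℂ K).symm (continuousLinearMapOfTendsto _ hdual),
    fun ψ => ?_⟩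
  rw [← inner_conj_symm, InnerProductSpace.toDual_symm_apply]
  simpa [continuousLinearMapOfTendsto] using hl ψ

theorem exists_tendsto_inner_apply_of_cauchySeq {T : ℕ → H →L[ℂ] K} {C : ℝ}
    (hC : ∀ n, ‖T n‖ ≤ C) (h : ∀ φ ψ, CauchySeq fun n => inner ℂ ψ (T n φ)) :
    ∃ T' : H →L[ℂ] K, ∀ φ ψ,
      Tendsto (fun n => inner ℂ ψ (T n φ)) atTop (𝓝 (inner ℂ ψ (T' φ))) := by
  choose v hv using fun φ => exists_tendsto_inner_of_cauchySeq (h φ)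
  have hadd : ∀ φ φ', v (φ + φ') = v φ + v φ' := fun φ φ' => ext_inner_left ℂ fun ψ =>
    tendsto_nhds_unique (hv _ ψ) (by simpa [inner_add_right] using (hv φ ψ).add (hv φ' ψ))
  have hsmul : ∀ (c : ℂ) φ, v (c • φ) = c • v φ := fun c φ => ext_inner_left ℂ fun ψ =>
    tendsto_nhds_unique (hv _ ψ) (by simpa [inner_smul_right] using (hv φ ψ).const_mul c)
  exact ⟨LinearMap.mkContinuous ⟨⟨v, hadd⟩, hsmul⟩ C fun φ =>
    norm_le_of_tendsto_inner (fun n => (T n).le_of_opNorm_le (hC n) φ) (hv φ), hv⟩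

end Hilbert

def LocallyUniformlyBoundedOn {ι X F : Type*} [TopologicalSpace X] [Norm F] (f : ι → X → F)
    (E : Set X) : Prop :=
  ∀ L : Set X, IsCompact L → L ⊆ E → ∃ C : ℝ, ∀ i, ∀ z ∈ L, ‖f i z‖ ≤ C

theorem Complex.equicontinuousAt_of_eventually_differentiableAt {ι F : Type*}
    [NormedAddCommGroup F] [NormedSpace ℂ F] {f : ι → ℂ → F} {z₀ : ℂ} {C : ℝ}
    (hf : ∀ᶠ z in 𝓝 z₀, ∀ i, DifferentiableAt ℂ (f i) z)
    (hC : ∀ᶠ z in 𝓝 z₀, ∀ i, ‖f i z‖ ≤ C) : EquicontinuousAt f z₀ := by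
  obtain ⟨R, hR, hball⟩ := Metric.eventually_nhds_iff_ball.mp (hf.and hC)
  have hr : 0 < R / 2 := half_pos hR
  have hderiv : ∀ i, ∀ x ∈ ball z₀ (R / 2), ‖deriv (f i) x‖ ≤ C / (R / 2) := by
    intro i x hx
    have hsub : closedBall x (R / 2) ⊆ ball z₀ R := fun y hy => by
      have := dist_triangle y x z₀
      rw [mem_closedBall] at hy; rw [mem_ball] at hx ⊢; linarith
    refine Complex.norm_deriv_le_of_forall_mem_sphere_norm_le hr ?_
      fun y hy => (hball y (hsub (sphere_subset_closedBall hy))).2 i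
    exact DifferentiableOn.diffContOnCl fun y hy => ((hball y
      (hsub (closure_ball_subset_closedBall hy))).1 i).differentiableWithinAt
  refine Metric.equicontinuousAt_of_continuity_modulus (fun z => C / (R / 2) * dist z₀ z) ?_ f ?_
  · simpa using
      ((continuous_const (y := z₀)).dist continuous_id).const_mul (C / (R / 2)) |>.tendsto z₀
  · filter_upwards [ball_mem_nhds z₀ hr] with z hz i
    rw [dist_eq_norm, dist_eq_norm]
    exact (convex_ball z₀ (R / 2)).norm_image_sub_le_of_norm_deriv_le
      (fun x hx => (hball x (ball_subset_ball (half_le_self hR.le) hx)).1 i) (hderiv i) hz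
      (mem_ball_self hr)

namespace LocallyUniformlyBoundedOn

variable {ι ι' X F : Type*} [TopologicalSpace X] [Norm F] {f : ι → X → F} {E : Set X}

theorem comp (hf : LocallyUniformlyBoundedOn f E) (κ : ι' → ι) :
    LocallyUniformlyBoundedOn (fun i => f (κ i)) E :=
  fun L hL hLE => (hf L hL hLE).imp fun _ hC i => hC (κ i)

theorem exists_forall_norm_le (hf : LocallyUniformlyBoundedOn f E) {z : X} (hz : z ∈ E) :
    ∃ C : ℝ, ∀ i, ‖f i z‖ ≤ C :=
  (hf {z} isCompact_singleton (Set.singleton_subset_iff.mpr hz)).imp fun _ hC i => hC i z rfl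

theorem inner_apply {H K : Type*} [NormedAddCommGroup H] [InnerProductSpace ℂ H]
    [NormedAddCommGroup K] [InnerProductSpace ℂ K] {M : ι → X → H →L[ℂ] K}
    (hM : LocallyUniformlyBoundedOn M E) (φ : H) (ψ : K) :
    LocallyUniformlyBoundedOn (fun i z => inner ℂ ψ (M i z φ)) E :=
  fun L hL hLE =>
    let ⟨C, hC⟩ := hM L hL hLE
    ⟨C * ‖φ‖ * ‖ψ‖, fun i z hz => norm_inner_apply_le_of_opNorm_le (hC i z hz) φ ψ⟩

theorem equicontinuousAt {F : Type*} [NormedAddCommGroup F] [NormedSpace ℂ F] {f : ι → ℂ → F}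
    {E : Set ℂ} (hbd : LocallyUniformlyBoundedOn f E) (hE : IsOpen E)
    (hf : ∀ i, DifferentiableOn ℂ (f i) E) {z₀ : ℂ} (hz₀ : z₀ ∈ E) : EquicontinuousAt f z₀ := by
  obtain ⟨r, hr, hrE⟩ := Metric.nhds_basis_closedBall.mem_iff.mp (hE.mem_nhds hz₀)
  obtain ⟨C, hC⟩ := hbd _ (isCompact_closedBall z₀ r) hrE
  exact Complex.equicontinuousAt_of_eventually_differentiableAt
    (eventually_of_mem (hE.mem_nhds hz₀) fun z hz i => (hf i).differentiableAt (hE.mem_nhds hz))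
    (eventually_of_mem (closedBall_mem_nhds z₀ hr) fun z hz i => hC i z hz)

end LocallyUniformlyBoundedOn

theorem exists_strictMono_cauchySeq_inner_apply {H K : Type*} [NormedAddCommGroup H]
    [InnerProductSpace ℂ H] [NormedAddCommGroup K] [InnerProductSpace ℂ K]
    [TopologicalSpace.SeparableSpace H] [TopologicalSpace.SeparableSpace K] {E : Set ℂ}
    (hE : IsOpen E) {M : ℕ → ℂ → H →L[ℂ] K} (hM : LocallyUniformlyBoundedOn M E)
    (hanal : ∀ n φ ψ, DifferentiableOn ℂ (fun z => inner ℂ ψ (M n z φ)) E) :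
    ∃ κ : ℕ → ℕ, StrictMono κ ∧
      ∀ z ∈ E, ∀ φ ψ, CauchySeq fun n => inner ℂ ψ (M (κ n) z φ) := by
  obtain ⟨S, hSE, hS, hES⟩ :=
    (TopologicalSpace.IsSeparable.of_separableSpace E).exists_countable_dense_subset
  obtain ⟨DH, hDH, hDHd⟩ := TopologicalSpace.exists_countable_dense H
  obtain ⟨DK, hDK, hDKd⟩ := TopologicalSpace.exists_countable_dense K
  have := hS.to_subtype; have := hDH.to_subtype; have := hDK.to_subtype
  obtain ⟨_, κ, hκ, hlim⟩ := tendsto_subseq_of_forall_isBounded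
    (fun n (p : DH × DK × S) => inner ℂ (p.2.1 : K) (M n p.2.2 (p.1 : H))) fun p => by
      obtain ⟨C, hC⟩ := (hM.inner_apply p.1 p.2.1).exists_forall_norm_le (hSE p.2.2.2)
      exact isBounded_iff_forall_norm_le.mpr ⟨C, Set.forall_mem_range.mpr hC⟩
  refine ⟨κ, hκ, fun z hz φ ψ => ?_⟩
  refine (((hM.comp κ).inner_apply φ ψ).equicontinuousAt hE (fun n => hanal (κ n) φ ψ)
    hz).cauchySeq_of_mem_closure (fun w hw => ?_) (hES hz)
  obtain ⟨C, hC⟩ := (hM.comp κ).exists_forall_norm_le (hSE hw)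
  exact cauchySeq_inner_apply_of_dense hC hDHd hDKd (fun φ hφ ψ hψ =>
    (tendsto_pi_nhds.mp hlim (⟨φ, hφ⟩, ⟨ψ, hψ⟩, ⟨w, hw⟩)).cauchySeq) φ ψ

theorem stmt_10_general
    {H K : Type*} [NormedAddCommGroup H] [InnerProductSpace ℂ H]
    [NormedAddCommGroup K] [InnerProductSpace ℂ K] [CompleteSpace K]
    [TopologicalSpace.SeparableSpace H] [TopologicalSpace.SeparableSpace K]
    (E : Set ℂ) (hE : IsOpen E)
    (M : ℕ → ℂ → (H →L[ℂ] K))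
    (hanal : ∀ (n : ℕ) (φ : H) (ψ : K),
      DifferentiableOn ℂ (fun z => (inner ℂ ψ (M n z φ) : ℂ)) E)
    (hbd : ∀ L : Set ℂ, IsCompact L → L ⊆ E →
      ∃ Cb : ℝ, ∀ (n : ℕ), ∀ z ∈ L, ‖M n z‖ ≤ Cb) :
    ∃ (Mlim : ℂ → (H →L[ℂ] K)) (κ : ℕ → ℕ), StrictMono κ ∧
      ∀ (φ : H) (ψ : K),
        DifferentiableOn ℂ (fun z => (inner ℂ ψ (Mlim z φ) : ℂ)) E ∧
        ∀ L : Set ℂ, IsCompact L → L ⊆ E →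
          TendstoUniformlyOn (fun (n : ℕ) (z : ℂ) => (inner ℂ ψ (M (κ n) z φ) : ℂ))
            (fun z => (inner ℂ ψ (Mlim z φ) : ℂ)) atTop L := by
  have hM : LocallyUniformlyBoundedOn M E := hbd
  obtain ⟨κ, hκ, hcauchy⟩ := exists_strictMono_cauchySeq_inner_apply hE hM hanal
  choose Mlim hMlim using fun z => show ∃ T : H →L[ℂ] K, z ∈ E → ∀ φ ψ,
      Tendsto (fun n => inner ℂ ψ (M (κ n) z φ)) atTop (𝓝 (inner ℂ ψ (T φ))) by
    by_cases hz : z ∈ E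
    · obtain ⟨C, hC⟩ := (hM.comp κ).exists_forall_norm_le hz
      exact (exists_tendsto_inner_apply_of_cauchySeq hC (hcauchy z hz)).imp fun _ h _ => h
    · exact ⟨0, fun h => absurd h hz⟩
  refine ⟨Mlim, κ, hκ, fun φ ψ => ?_⟩
  have hloc : TendstoLocallyUniformlyOn (fun n z => inner ℂ ψ (M (κ n) z φ))
      (fun z => inner ℂ ψ (Mlim z φ)) atTop E :=
    (tendstoLocallyUniformlyOn_iff_forall_isCompact hE).mpr fun L hLE hL =>
      EquicontinuousOn.tendstoUniformlyOn_of_tendsto hL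
        (fun z hz => (((hM.comp κ).inner_apply φ ψ).equicontinuousAt hE
          (fun n => hanal (κ n) φ ψ) (hLE hz)).equicontinuousWithinAt L)
        fun z hz => hMlim z (hLE hz) φ ψ
  exact ⟨hloc.differentiableOn (Eventually.of_forall fun n => hanal (κ n) φ ψ) hE,
    fun L hL hLE => (tendstoLocallyUniformlyOn_iff_forall_isCompact hE).mp hloc L hLE hL⟩

/-- Compactness in the material law topology `𝓗_w(E; B(H,K))`: a sequence of
`B(H,K)`-valued maps on an open set `E ⊆ ℂ`, analytic in the weak sense and locally uniformly
norm-bounded, has a subsequence converging — weakly in operator pairings, locally uniformly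
on `E` — to a weakly analytic limit. -/
theorem stmt_10
    {H K : Type*} [NormedAddCommGroup H] [InnerProductSpace ℂ H] [CompleteSpace H]
    [NormedAddCommGroup K] [InnerProductSpace ℂ K] [CompleteSpace K]
    [TopologicalSpace.SeparableSpace H] [TopologicalSpace.SeparableSpace K]
    (E : Set ℂ) (hE : IsOpen E)
    (M : ℕ → ℂ → (H →L[ℂ] K))
    (hanal : ∀ (n : ℕ) (φ : H) (ψ : K),
      DifferentiableOn ℂ (fun z => (inner ℂ ψ (M n z φ) : ℂ)) E)
    (hbd : ∀ L : Set ℂ, IsCompact L → L ⊆ E →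
      ∃ Cb : ℝ, ∀ (n : ℕ), ∀ z ∈ L, ‖M n z‖ ≤ Cb) :
    ∃ (Mlim : ℂ → (H →L[ℂ] K)) (κ : ℕ → ℕ), StrictMono κ ∧
      ∀ (φ : H) (ψ : K),
        DifferentiableOn ℂ (fun z => (inner ℂ ψ (Mlim z φ) : ℂ)) E ∧
        ∀ L : Set ℂ, IsCompact L → L ⊆ E →
          TendstoUniformlyOn (fun (n : ℕ) (z : ℂ) => (inner ℂ ψ (M (κ n) z φ) : ℂ))
            (fun z => (inner ℂ ψ (Mlim z φ) : ℂ)) atTop L :=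
  stmt_10_general E hE M hanal hbd
end

section
/- Let ν ∈ ℝ and let φ : ℝ → ℂ be continuous with compact support. Define the Fourier–Laplace transform (𝓛_ν φ)(ξ) := (2π)^{-1/2} ∫_ℝ exp(−iξt − νt) φ(t) dt for ξ ∈ ℝ. Then ∫_ℝ |(𝓛_ν φ)(ξ)|² dξ = ∫_ℝ |φ(t)|² exp(−2νt) dt; in particular, 𝓛_ν is an isometry from the dense subspace of continuous compactly supported functions of the exponentially weighted space L²_ν(ℝ) into L²(ℝ), and hence extends to a unitary operator L²_ν(ℝ) → L²(ℝ). -/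
/-!
With `ψ t = exp (-ν t) φ t`, the transform `𝓛_ν φ` is `(2π)^{-1/2}` times the Fourier transform
of `ψ` rescaled by `2π`, so the identity reduces to Plancherel `‖𝓕 ψ‖₂ = ‖ψ‖₂` for the integrable,
square-integrable function `ψ`. For such functions the integral `𝓕 ψ` agrees a.e. with Mathlib's
unitary `L²` Fourier transform, because both induce the same tempered distribution.
-/

open MeasureTheory Real
open scoped FourierTransform

section Plancherel

variable {V F : Type*} [NormedAddCommGroup V] [InnerProductSpace ℝ V] [FiniteDimensional ℝ V]
  [MeasurableSpace V] [BorelSpace V]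
  [NormedAddCommGroup F] [InnerProductSpace ℂ F] [CompleteSpace F]

theorem Real.integral_fourier_smul_eq (g : V → ℂ) (f : V → F) (hg : Integrable g)
    (hf : Integrable f) : ∫ x, 𝓕 g x • f x = ∫ ξ, g ξ • 𝓕 f ξ := by
  simpa using! VectorFourier.integral_fourierIntegral_smul_eq_flip (L := innerₗ V)
    Real.continuous_fourierChar continuous_inner hg hf

theorem MeasureTheory.Lp.fourier_toLp_ae_eq {f : V → F} (hf : Integrable f) (hf2 : MemLp f 2) :
    ((𝓕 (hf2.toLp f) : Lp F 2 (volume : Measure V)) : V → F) =ᵐ[volume] 𝓕 f := by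
  refine ae_eq_of_integral_contDiff_smul_eq ((Lp.memLp _).locallyIntegrable one_le_two)
    (VectorFourier.fourierIntegral_continuous Real.continuous_fourierChar
      (innerSL ℝ).continuous₂ hf).locallyIntegrable fun g hg hgc ↦ ?_
  set φ : SchwartzMap V ℂ := (hgc.comp_left Complex.ofReal_zero).toSchwartzMap
    (Complex.ofRealCLM.contDiff.comp hg)
  have hφ : ∀ x, φ x = g x := fun _ ↦ rfl
  calc ∫ x, g x • ((𝓕 (hf2.toLp f) : Lp F 2 (volume : Measure V)) : V → F) x
      = ((𝓕 (hf2.toLp f) : Lp F 2 (volume : Measure V)) : TemperedDistribution V F) φ := by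
        simp [hφ]
    _ = (hf2.toLp f : TemperedDistribution V F) (𝓕 φ) := by
        rw [← Lp.fourier_toTemperedDistribution_eq]
        rfl
    _ = ∫ x, 𝓕 (φ : V → ℂ) x • f x := by
        rw [Lp.toTemperedDistribution_apply]
        exact integral_congr_ae <| hf2.coeFn_toLp.mono fun x h ↦ by
          simp only [h, SchwartzMap.fourier_coe]
    _ = ∫ x, g x • 𝓕 f x := by
        rw [Real.integral_fourier_smul_eq _ _ φ.integrable hf]
        simp [hφ]

omit [InnerProductSpace ℂ F] [CompleteSpace F] in
theorem MeasureTheory.Lp.norm_sq_eq_integral_norm_sq {α : Type*} [MeasurableSpace α]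
    {μ : Measure α} (h : Lp F 2 μ) : ‖h‖ ^ 2 = ∫ x, ‖h x‖ ^ 2 ∂μ := by
  rw [Lp.norm_def, toReal_eLpNorm (Lp.aestronglyMeasurable h),
    lpNorm_eq_integral_norm_rpow_toReal (by norm_num) (by norm_num) (Lp.aestronglyMeasurable h),
    ← Real.rpow_natCast, ← Real.rpow_mul (integral_nonneg fun x ↦ by positivity)]
  norm_num

theorem Real.integral_norm_sq_fourier {f : V → F} (hf : Integrable f) (hf2 : MemLp f 2) :
    ∫ ξ, ‖𝓕 f ξ‖ ^ 2 = ∫ x, ‖f x‖ ^ 2 := by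
  calc ∫ ξ, ‖𝓕 f ξ‖ ^ 2 = ∫ ξ, ‖((𝓕 (hf2.toLp f) : Lp F 2 (volume : Measure V)) : V → F) ξ‖ ^ 2 :=
        integral_congr_ae <| (Lp.fourier_toLp_ae_eq hf hf2).mono fun ξ h ↦ by simp only [h]
    _ = ‖hf2.toLp f‖ ^ 2 := by rw [← Lp.norm_sq_eq_integral_norm_sq, Lp.norm_fourier_eq]
    _ = ∫ x, ‖f x‖ ^ 2 := by
        rw [Lp.norm_sq_eq_integral_norm_sq]
        exact integral_congr_ae <| hf2.coeFn_toLp.mono fun x h ↦ by simp only [h]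

end Plancherel

theorem Real.fourier_exp_mul_eq_integral (ν ξ : ℝ) (φ : ℝ → ℂ) :
    𝓕 (fun t : ℝ ↦ Complex.exp (-(ν * t : ℂ)) * φ t) (ξ / (2 * π)) =
      ∫ t : ℝ, Complex.exp (-(Complex.I * ξ * t) - ν * t) * φ t := by
  rw [Real.fourier_real_eq_integral_exp_smul]
  congr 1 with t
  rw [smul_eq_mul, ← mul_assoc, ← Complex.exp_add]
  congr 2
  have hπ : (π : ℂ) ≠ 0 := Complex.ofReal_ne_zero.mpr Real.pi_ne_zero
  push_cast
  field_simp
  ring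

theorem norm_inv_sqrt_mul_sq {c : ℝ} (hc : 0 ≤ c) (z : ℂ) :
    ‖((√c)⁻¹ : ℂ) * z‖ ^ 2 = c⁻¹ * ‖z‖ ^ 2 := by
  rw [norm_mul, mul_pow, norm_inv, Complex.norm_real, Real.norm_of_nonneg (Real.sqrt_nonneg c),
    inv_pow, Real.sq_sqrt hc]

theorem integral_inv_mul_comp_div (g : ℝ → ℝ) {c : ℝ} (hc : 0 < c) :
    ∫ x, c⁻¹ * g (x / c) = ∫ x, g x := by
  rw [integral_const_mul, Measure.integral_comp_div, abs_of_pos hc, smul_eq_mul,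
    inv_mul_cancel_left₀ hc.ne']

theorem norm_exp_mul_sq (ν t : ℝ) (z : ℂ) :
    ‖Complex.exp (-(ν * t : ℂ)) * z‖ ^ 2 = ‖z‖ ^ 2 * Real.exp (-(2 * ν * t)) := by
  rw [norm_mul, mul_pow, mul_comm, Complex.norm_exp, ← Real.exp_nat_mul]
  norm_cast
  ring_nf

/-- Plancherel identity for the Fourier–Laplace transformation: for
continuous, compactly supported `φ : ℝ → ℂ` and `ν ∈ ℝ`,
`∫ |(𝓛_ν φ)(ξ)|² dξ = ∫ |φ(t)|² exp(−2νt) dt`, where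
`(𝓛_ν φ)(ξ) = (2π)^{-1/2} ∫ exp(−iξt − νt) φ(t) dt`; so `𝓛_ν` is an isometry from the
continuous compactly supported functions in `L²_ν(ℝ)` into `L²(ℝ)` and extends unitarily. -/
theorem stmt_12 (ν : ℝ) (φ : ℝ → ℂ) (hφ : Continuous φ) (hφc : HasCompactSupport φ) :
    ∫ ξ : ℝ,
        ‖((Real.sqrt (2 * Real.pi))⁻¹ : ℂ) *
          ∫ t : ℝ, Complex.exp (-(Complex.I * (ξ : ℂ) * (t : ℂ)) - (ν : ℂ) * (t : ℂ)) * φ t‖ ^ 2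
      = ∫ t : ℝ, ‖φ t‖ ^ 2 * Real.exp (-(2 * ν * t)) := by
  set ψ : ℝ → ℂ := fun t ↦ Complex.exp (-(ν * t : ℂ)) * φ t
  have hψ : Continuous ψ := by fun_prop
  have hψc : HasCompactSupport ψ := hφc.mul_left
  calc _ = ∫ ξ : ℝ, (2 * π)⁻¹ * ‖𝓕 ψ (ξ / (2 * π))‖ ^ 2 := by
          congr 1 with ξ
          rw [← Real.fourier_exp_mul_eq_integral, norm_inv_sqrt_mul_sq (by positivity)]
    _ = ∫ ξ : ℝ, ‖𝓕 ψ ξ‖ ^ 2 := integral_inv_mul_comp_div (fun ξ ↦ ‖𝓕 ψ ξ‖ ^ 2) (by positivity)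
    _ = ∫ t : ℝ, ‖ψ t‖ ^ 2 := Real.integral_norm_sq_fourier
          (hψ.integrable_of_hasCompactSupport hψc) (hψ.memLp_of_hasCompactSupport hψc)
    _ = _ := integral_congr_ae <| ae_of_all _ fun t ↦ norm_exp_mul_sq ν t (φ t)
end

section
/- Let H be a complex Hilbert space, let A be a densely defined closed linear operator on H with domain dom(A) that is skew-self-adjoint, i.e. its Hilbert-space adjoint satisfies A* = −A (in particular dom(A*) = dom(A)), and let B : H → H be a bounded linear operator with Re⟨B u, u⟩ ≥ c‖u‖² for all u ∈ H and some c > 0. Then B + A : dom(A) → H is bijective, and the inverse satisfies ‖(B + A)^{-1} f‖ ≤ (1/c)‖f‖ for all f ∈ H. -/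
/-! Adding a skew-adjoint `A` does not change `re ⟪B u, u⟫`, so `B + A` inherits the coercivity
of `B`: `c ‖u‖ ≤ ‖(B + A) u‖`. This gives injectivity and the bound. As a bounded perturbation of a
closed operator, `B + A` is closed, so the bound makes its range closed. A vector `f` orthogonal
to the range lies in the domain of `A* = -A` with `A f = B* f`, whence
`c ‖f‖² ≤ re ⟪B f, f⟫ = re ⟪A f, f⟫ = 0`; so the range is also dense. -/

open LinearPMap RCLike

section Coercive

variable {𝕜 H : Type*} [RCLike 𝕜] [NormedAddCommGroup H] [InnerProductSpace 𝕜 H]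

theorem norm_le_of_mul_sq_le_re_inner {c : ℝ} (hc : 0 < c) {x y : H}
    (h : c * ‖x‖ ^ 2 ≤ re (inner 𝕜 y x)) : ‖x‖ ≤ 1 / c * ‖y‖ := by
  have hyx : c * ‖x‖ ^ 2 ≤ ‖y‖ * ‖x‖ := h.trans (re_inner_le_norm y x)
  rw [div_mul_eq_mul_div, one_mul, le_div_iff₀ hc]
  rcases (norm_nonneg x).eq_or_lt with hx | hx
  · rw [← hx, zero_mul]
    positivity
  · nlinarith

end Coercive

namespace LinearPMap

section Normed

variable {𝕜 E F : Type*} [NontriviallyNormedField 𝕜] [NormedAddCommGroup E] [NormedSpace 𝕜 E]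
  [NormedAddCommGroup F] [NormedSpace 𝕜 F]

theorem IsClosed.continuousLinearMap_vadd {A : E →ₗ.[𝕜] F} (hA : A.IsClosed) (B : E →L[𝕜] F) :
    ((B : E →ₗ[𝕜] F) +ᵥ A).IsClosed := by
  have hgraph : (((B : E →ₗ[𝕜] F) +ᵥ A).graph : Set (E × F)) =
      (fun p : E × F => (p.1, p.2 - B p.1)) ⁻¹' A.graph := by
    ext ⟨x, y⟩
    simp only [SetLike.mem_coe, mem_graph_iff, Set.mem_preimage, vadd_apply]
    constructor
    · rintro ⟨u, rfl, rfl⟩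
      exact ⟨u, rfl, by simp⟩
    · rintro ⟨u, rfl, hu⟩
      exact ⟨u, rfl, by simp [hu]⟩
  unfold LinearPMap.IsClosed
  rw [hgraph]
  exact hA.preimage (by fun_prop)

theorem IsClosed.isClosed_range_of_le_mul_norm [CompleteSpace E] [CompleteSpace F]
    {T : E →ₗ.[𝕜] F} (hT : T.IsClosed) {K : ℝ} (hK : ∀ x : T.domain, ‖(x : E)‖ ≤ K * ‖T x‖) :
    _root_.IsClosed (Set.range T) := by
  have : CompleteSpace T.graph := hT.completeSpace_coe
  -- The bound makes the projection of the complete graph onto `F` antilipschitz.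
  let π : T.graph →L[𝕜] F := (ContinuousLinearMap.snd 𝕜 E F).comp T.graph.subtypeL
  have hπ : AntilipschitzWith ⟨max K 1, by positivity⟩ π := by
    refine AddMonoidHomClass.antilipschitz_of_bound π fun ⟨⟨x', y⟩, hp⟩ => ?_
    obtain ⟨x, rfl, rfl⟩ := (mem_graph_iff T).mp hp
    have hTx : 0 ≤ ‖T x‖ := norm_nonneg _
    change max ‖(x : E)‖ ‖T x‖ ≤ max K 1 * ‖T x‖
    refine max_le ((hK x).trans ?_) ?_ <;> nlinarith [le_max_left K 1, le_max_right K 1]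
  have hrange : Set.range π = Set.range T := by
    ext y
    simp [π]
  rw [← hrange]
  exact hπ.isClosed_range π.uniformContinuous

end Normed

section Inner

variable {𝕜 H : Type*} [RCLike 𝕜] [NormedAddCommGroup H] [InnerProductSpace 𝕜 H]

local notation "⟪" x ", " y "⟫" => inner 𝕜 x y

theorem IsFormalAdjoint.re_inner_apply_self_eq_zero {A : H →ₗ.[𝕜] H}
    (hA : A.IsFormalAdjoint (-A)) (u : A.domain) : re ⟪A u, u⟫ = 0 := by
  have h := congrArg re (hA u u)
  rw [neg_apply, inner_neg_right, AddMonoidHom.map_neg, inner_re_symm (u : H)] at h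
  linarith

theorem IsFormalAdjoint.re_inner_vadd_apply_self {A : H →ₗ.[𝕜] H} (hA : A.IsFormalAdjoint (-A))
    (B : H →ₗ[𝕜] H) (u : A.domain) : re ⟪(B +ᵥ A) u, u⟫ = re ⟪B u, u⟫ := by
  rw [vadd_apply, inner_add_left, AddMonoidHom.map_add, hA.re_inner_apply_self_eq_zero, add_zero]

theorem isFormalAdjoint_neg_of_adjoint_eq_neg [CompleteSpace H] {A : H →ₗ.[𝕜] H}
    (hA : Dense (A.domain : Set H)) (hskew : A† = -A) : A.IsFormalAdjoint (-A) :=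
  hskew ▸ (adjoint_isFormalAdjoint hA).symm

theorem mem_graph_adjoint_of_mem_orthogonal_range_vadd [CompleteSpace H] {A : H →ₗ.[𝕜] H}
    (hA : Dense (A.domain : Set H)) (B : H →L[𝕜] H) {f : H}
    (hf : f ∈ (LinearMap.range ((B : H →ₗ[𝕜] H) +ᵥ A).toFun)ᗮ) :
    (f, -(B.adjoint f)) ∈ A†.graph := by
  have key : ∀ u : A.domain, ⟪-(B.adjoint f), u⟫ = ⟪f, A u⟫ := by
    intro u
    have h : ⟪f, B u⟫ + ⟪f, A u⟫ = 0 := by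
      rw [← inner_add_right]
      exact Submodule.inner_left_of_mem_orthogonal (LinearMap.mem_range_self _ u) hf
    rw [inner_neg_left, ContinuousLinearMap.adjoint_inner_left]
    exact (eq_neg_of_add_eq_zero_right h).symm
  have hfdom : f ∈ A†.domain := mem_adjoint_domain_of_exists f ⟨_, key⟩
  exact (mem_graph_iff _).mpr ⟨⟨f, hfdom⟩, rfl, adjoint_apply_eq hA _ key⟩

theorem orthogonal_range_vadd_eq_bot [CompleteSpace H] {A : H →ₗ.[𝕜] H}
    (hA : Dense (A.domain : Set H)) (hskew : A† = -A) (B : H →L[𝕜] H) {c : ℝ} (hc : 0 < c)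
    (hB : ∀ u : H, c * ‖u‖ ^ 2 ≤ re ⟪B u, u⟫) :
    (LinearMap.range ((B : H →ₗ[𝕜] H) +ᵥ A).toFun)ᗮ = ⊥ := by
  refine (Submodule.eq_bot_iff _).mpr fun f hf => ?_
  have hgraph := mem_graph_adjoint_of_mem_orthogonal_range_vadd hA B hf
  rw [hskew, mem_graph_iff] at hgraph
  obtain ⟨u, rfl, hu⟩ := hgraph
  have hAu : A u = B.adjoint u := by simpa using hu
  have hre : re ⟪B u, u⟫ = 0 := by
    rw [inner_re_symm, ← ContinuousLinearMap.adjoint_inner_left, ← hAu]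
    exact (isFormalAdjoint_neg_of_adjoint_eq_neg hA hskew).re_inner_apply_self_eq_zero u
  have hu0 : c * ‖(u : H)‖ ^ 2 ≤ re ⟪(0 : H), u⟫ := by simpa [hre] using hB u
  simpa using norm_le_of_mul_sq_le_re_inner hc hu0

end Inner

end LinearPMap

/-- If `A` is a densely defined, closed, skew-self-adjoint (`A* = −A`) operator
on a complex Hilbert space `H` and `B : H → H` is bounded with `Re⟨Bu, u⟩ ≥ c‖u‖²` for some
`c > 0`, then `B + A : dom(A) → H` is bijective with `‖(B + A)⁻¹ f‖ ≤ (1/c)‖f‖`. -/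
theorem stmt_13
    {H : Type*} [NormedAddCommGroup H] [InnerProductSpace ℂ H] [CompleteSpace H]
    (A : H →ₗ.[ℂ] H) (hdense : Dense (A.domain : Set H)) (hclosed : A.IsClosed)
    (hskew : A.adjoint = -A)
    (B : H →L[ℂ] H) (c : ℝ) (hc : 0 < c)
    (hcoer : ∀ u : H, c * ‖u‖ ^ 2 ≤ (inner ℂ (B u) u : ℂ).re) :
    Function.Bijective (fun u : A.domain => B (u : H) + A u) ∧
    ∀ (u : A.domain) (f : H), B (u : H) + A u = f → ‖(u : H)‖ ≤ (1 / c) * ‖f‖ := by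
  set T := (B : H →ₗ[ℂ] H) +ᵥ A
  have hbound : ∀ u : A.domain, ‖(u : H)‖ ≤ 1 / c * ‖T u‖ := fun u =>
    norm_le_of_mul_sq_le_re_inner hc <| (hcoer u).trans_eq
      ((isFormalAdjoint_neg_of_adjoint_eq_neg hdense hskew).re_inner_vadd_apply_self B u).symm
  have hinj : Function.Injective T := (injective_iff_map_eq_zero T.toFun).mpr fun u hu => by
    have hu0 := hbound u
    rw [show T u = 0 from hu, norm_zero, mul_zero] at hu0
    exact Subtype.ext (norm_le_zero_iff.mp hu0)
  have : CompleteSpace (LinearMap.range T.toFun) :=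
    ((hclosed.continuousLinearMap_vadd B).isClosed_range_of_le_mul_norm hbound).completeSpace_coe
  have hsurj : Function.Surjective T := LinearMap.range_eq_top.mp <|
    Submodule.orthogonal_eq_bot_iff.mp (orthogonal_range_vadd_eq_bot hdense hskew B hc hcoer)
  exact ⟨⟨hinj, hsurj⟩, fun u f hf => hf ▸ hbound u⟩
end
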